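/- arXiv:2310.05539 — 2 statements merged into one kernel-verified Lean document; each statement's English description precedes it below -/
import Mathlib

section
/- Let n, p, q be positive integers, A ∈ ℝ^{n×q} with AᵀA invertible, β_A ∈ ℝ^{p×q}, E ∈ ℝ^{n×p}, M = A β_Aᵀ + E, X = (A, M) ∈ ℝ^{n×(q+p)}, θ = (θ_Aᵀ, θ_Mᵀ)ᵀ ∈ ℝ^{q+p}, Z ∈ ℝ^n, and Y = Xθ + Z. For any θ̂ = (θ̂_Aᵀ, θ̂_Mᵀ)ᵀ ∈ ℝ^{q+p} and any matrix Û ∈ ℝ^{(q+p)×q}, define γ = β_Aᵀθ_M, β̂_A = ((AᵀA)⁻¹AᵀM)ᵀ, γ̂ = β̂_Aᵀθ̂_M + n⁻¹ÛᵀXᵀ(Y − Xθ̂), Σ̂_A = n⁻¹AᵀA, Σ̂_X = n⁻¹XᵀX, E_M = Eθ_M, g_j = (0_qᵀ, g̃_jᵀ)ᵀ where g̃_j is the j-th column of (Σ̂_A⁻¹ n⁻¹AᵀM)ᵀ, and G = (g₁,…,g_q). Then γ̂ − γ = W + B exactly, where W = n⁻¹Σ̂_A⁻¹AᵀE_M +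 n⁻¹ÛᵀXᵀZ and B = (Σ̂_X Û − G)ᵀ(θ − θ̂). -/
open Matrix

/-!
Everything reduces to the residual identity `Y − Xθ̂ = X(θ − θ̂) + Z` and the fact that the
least-squares coefficient is unchanged by the scaling `n⁻¹`, so that
`Σ̂_A⁻¹ Σ̂_{AM} = β̂_Aᵀ = β_Aᵀ + (AᵀA)⁻¹AᵀE`. Then `Gᵀ(θ − θ̂) = β̂_Aᵀ(θ_M − θ̂_M)` and the
`Û`-terms of `γ̂` and `W + B` agree, leaving a linear identity in `θ_M` and `θ̂_M`.
-/

namespace Matrix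

variable {m k l : Type*} [Fintype m] [DecidableEq m] [Fintype k]

theorem inv_mul_mul_mul_add {R : Type*} [CommRing R] (N : Matrix m k R) (A : Matrix k m R)
    (hNA : IsUnit (N * A)) (C : Matrix m l R) (E : Matrix k l R) :
    (N * A)⁻¹ * (N * (A * C + E)) = C + (N * A)⁻¹ * (N * E) := by
  rw [Matrix.mul_add, Matrix.mul_add, ← Matrix.mul_assoc N A C, ← Matrix.mul_assoc,
    nonsing_inv_mul _ ((isUnit_iff_isUnit_det _).mp hNA), Matrix.one_mul]

theorem inv_smul_mul_smul {K : Type*} [Field K] {c : K} (hc : c ≠ 0) {S : Matrix m m K}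
    (hS : IsUnit S) (T : Matrix m l K) : (c • S)⁻¹ * (c • T) = S⁻¹ * T := by
  have hinv : (c • S)⁻¹ = c⁻¹ • S⁻¹ := inv_eq_left_inv <| by
    rw [smul_mul_smul_comm, inv_mul_cancel₀ hc, one_smul,
      nonsing_inv_mul _ ((isUnit_iff_isUnit_det S).mp hS)]
  rw [hinv, smul_mul, Matrix.mul_smul, smul_smul, inv_mul_cancel₀ hc, one_smul]

theorem fromRows_zero_transpose_mulVec {R : Type*} [Semiring R] [Fintype l]
    (C : Matrix l k R) (v : k ⊕ l → R) :
    (fromRows (0 : Matrix k k R) C)ᵀ *ᵥ v = Cᵀ *ᵥ fun j => v (Sum.inr j) := by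
  rw [transpose_fromRows, transpose_zero, ← Sum.elim_comp_inl_inr v, fromCols_mulVec_sumElim,
    zero_mulVec, zero_add]
  rfl

end Matrix

theorem statement_2_general
    (n p q : ℕ) (hn : 0 < n)
    (A : Matrix (Fin n) (Fin q) ℝ) (hA : IsUnit (Aᵀ * A))
    (βA : Matrix (Fin p) (Fin q) ℝ) (E : Matrix (Fin n) (Fin p) ℝ)
    (M : Matrix (Fin n) (Fin p) ℝ) (hM : M = A * βAᵀ + E)
    (X : Matrix (Fin n) (Fin q ⊕ Fin p) ℝ)
    (θA : Fin q → ℝ) (θM : Fin p → ℝ)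
    (θ : Fin q ⊕ Fin p → ℝ) (hθ : θ = Sum.elim θA θM)
    (Z Y : Fin n → ℝ) (hY : Y = X *ᵥ θ + Z)
    (θhat : Fin q ⊕ Fin p → ℝ)
    (Uhat : Matrix (Fin q ⊕ Fin p) (Fin q) ℝ)
    (γ : Fin q → ℝ) (hγ : γ = βAᵀ *ᵥ θM)
    (βhatA : Matrix (Fin p) (Fin q) ℝ) (hβhatA : βhatA = ((Aᵀ * A)⁻¹ * (Aᵀ * M))ᵀ)
    (γhat : Fin q → ℝ)
    (hγhat : γhat = βhatAᵀ *ᵥ (fun j => θhat (Sum.inr j))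
        + (n : ℝ)⁻¹ • (Uhatᵀ *ᵥ (Xᵀ *ᵥ (Y - X *ᵥ θhat))))
    (SighatA : Matrix (Fin q) (Fin q) ℝ) (hSighatA : SighatA = (n : ℝ)⁻¹ • (Aᵀ * A))
    (SighatAM : Matrix (Fin q) (Fin p) ℝ) (hSighatAM : SighatAM = (n : ℝ)⁻¹ • (Aᵀ * M))
    (SighatX : Matrix (Fin q ⊕ Fin p) (Fin q ⊕ Fin p) ℝ)
    (hSighatX : SighatX = (n : ℝ)⁻¹ • (Xᵀ * X))
    (EM : Fin n → ℝ) (hEM : EM = E *ᵥ θM)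
    (G : Matrix (Fin q ⊕ Fin p) (Fin q) ℝ)
    (hG : G = Matrix.fromRows (0 : Matrix (Fin q) (Fin q) ℝ) ((SighatA⁻¹ * SighatAM)ᵀ))
    (W : Fin q → ℝ)
    (hW : W = (n : ℝ)⁻¹ • (SighatA⁻¹ *ᵥ (Aᵀ *ᵥ EM)) + (n : ℝ)⁻¹ • (Uhatᵀ *ᵥ (Xᵀ *ᵥ Z)))
    (B : Fin q → ℝ) (hB : B = (SighatX * Uhat - G)ᵀ *ᵥ (θ - θhat)) :
    γhat - γ = W + B := by
  have hn0 : (n : ℝ)⁻¹ ≠ 0 := inv_ne_zero (Nat.cast_ne_zero.mpr hn.ne')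
  set K := (Aᵀ * A)⁻¹ * (Aᵀ * E)
  have hβhat : βhatAᵀ = βAᵀ + K := by
    rw [hβhatA, transpose_transpose, hM, inv_mul_mul_mul_add _ _ hA]
  have hcoef : SighatA⁻¹ * SighatAM = βhatAᵀ := by
    rw [hSighatA, hSighatAM, inv_smul_mul_smul hn0 hA, hβhatA, transpose_transpose]
  have hW₁ : (n : ℝ)⁻¹ • (SighatA⁻¹ *ᵥ (Aᵀ *ᵥ EM)) = K *ᵥ θM := by
    rw [hEM, mulVec_mulVec, mulVec_mulVec, ← smul_mulVec, Matrix.mul_assoc, ← Matrix.mul_smul,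
      hSighatA, inv_smul_mul_smul hn0 hA]
  have hGd : Gᵀ *ᵥ (θ - θhat) = βhatAᵀ *ᵥ (θM - fun j => θhat (Sum.inr j)) := by
    rw [hG, fromRows_zero_transpose_mulVec, transpose_transpose, hcoef, hθ]
    rfl
  have hres : Y - X *ᵥ θhat = X *ᵥ (θ - θhat) + Z := by
    rw [hY, mulVec_sub]
    abel
  have hgram : (SighatX * Uhat)ᵀ *ᵥ (θ - θhat)
      = (n : ℝ)⁻¹ • (Uhatᵀ *ᵥ (Xᵀ *ᵥ (X *ᵥ (θ - θhat)))) := by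
    rw [hSighatX, transpose_mul, transpose_smul, transpose_mul, transpose_transpose,
      Matrix.mul_smul, smul_mulVec, mulVec_mulVec, mulVec_mulVec, Matrix.mul_assoc]
  rw [hγhat, hγ, hW, hB, hW₁, transpose_sub, sub_mulVec, hGd, hgram, hres, hβhat]
  simp only [mulVec_add, add_mulVec, mulVec_sub, smul_add]
  abel

/-- In the LSEM `M = Aβ_Aᵀ + E`, `Y = Xθ + Z` with `X = (A, M)`, the debiased estimator
`γ̂ = β̂_Aᵀθ̂_M + n⁻¹ÛᵀXᵀ(Y − Xθ̂)` of the mediation effect `γ = β_Aᵀθ_M` satisfies the exact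
decomposition `γ̂ − γ = W + B`, where `W = n⁻¹Σ̂_A⁻¹AᵀE_M + n⁻¹ÛᵀXᵀZ` and
`B = (Σ̂_X Û − G)ᵀ(θ − θ̂)`, with `G = (g₁,…,g_q)`, `g_j = (0_qᵀ, g̃_jᵀ)ᵀ`, and `g̃_j` the
`j`-th column of `(Σ̂_A⁻¹ Σ̂_{AM})ᵀ`. -/
theorem statement_2
    (n p q : ℕ) (hn : 0 < n)
    (A : Matrix (Fin n) (Fin q) ℝ) (hA : IsUnit (Aᵀ * A))
    (βA : Matrix (Fin p) (Fin q) ℝ) (E : Matrix (Fin n) (Fin p) ℝ)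
    (M : Matrix (Fin n) (Fin p) ℝ) (hM : M = A * βAᵀ + E)
    (X : Matrix (Fin n) (Fin q ⊕ Fin p) ℝ) (hX : X = Matrix.fromCols A M)
    (θA : Fin q → ℝ) (θM : Fin p → ℝ)
    (θ : Fin q ⊕ Fin p → ℝ) (hθ : θ = Sum.elim θA θM)
    (Z Y : Fin n → ℝ) (hY : Y = X *ᵥ θ + Z)
    (θhat : Fin q ⊕ Fin p → ℝ)
    (Uhat : Matrix (Fin q ⊕ Fin p) (Fin q) ℝ)
    (γ : Fin q → ℝ) (hγ : γ = βAᵀ *ᵥ θM)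
    (βhatA : Matrix (Fin p) (Fin q) ℝ) (hβhatA : βhatA = ((Aᵀ * A)⁻¹ * (Aᵀ * M))ᵀ)
    (γhat : Fin q → ℝ)
    (hγhat : γhat = βhatAᵀ *ᵥ (fun j => θhat (Sum.inr j))
        + (n : ℝ)⁻¹ • (Uhatᵀ *ᵥ (Xᵀ *ᵥ (Y - X *ᵥ θhat))))
    (SighatA : Matrix (Fin q) (Fin q) ℝ) (hSighatA : SighatA = (n : ℝ)⁻¹ • (Aᵀ * A))
    (SighatAM : Matrix (Fin q) (Fin p) ℝ) (hSighatAM : SighatAM = (n : ℝ)⁻¹ • (Aᵀ * M))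
    (SighatX : Matrix (Fin q ⊕ Fin p) (Fin q ⊕ Fin p) ℝ)
    (hSighatX : SighatX = (n : ℝ)⁻¹ • (Xᵀ * X))
    (EM : Fin n → ℝ) (hEM : EM = E *ᵥ θM)
    (G : Matrix (Fin q ⊕ Fin p) (Fin q) ℝ)
    (hG : G = Matrix.fromRows (0 : Matrix (Fin q) (Fin q) ℝ) ((SighatA⁻¹ * SighatAM)ᵀ))
    (W : Fin q → ℝ)
    (hW : W = (n : ℝ)⁻¹ • (SighatA⁻¹ *ᵥ (Aᵀ *ᵥ EM)) + (n : ℝ)⁻¹ • (Uhatᵀ *ᵥ (Xᵀ *ᵥ Z)))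
    (B : Fin q → ℝ) (hB : B = (SighatX * Uhat - G)ᵀ *ᵥ (θ - θhat)) :
    γhat - γ = W + B :=
  statement_2_general n p q hn A hA βA E M hM X θA θM θ hθ Z Y hY θhat Uhat γ hγ βhatA hβhatA γhat
    hγhat SighatA hSighatA SighatAM hSighatAM SighatX hSighatX EM hEM G hG W hW B hB
end

section
/- (Lemma on maximal norm concentration.) Let A₁,…,A_n be i.i.d. q-dimensional centered random vectors such that the (possibly dependent) coordinates of each A_i are subGaussian with a common parameter. If q ≲ n^{1/2}, then there is a constant c > 0 such that max_{1≤i≤n} |‖A_i‖₂ − σ_A√q| ≤ c n^{1/4} with probability at least 1 − e^{−c n^{1/2}/q + log(nq)}, where σ_A² = q⁻¹ Σ_{j=1}^q E[A_{ij}²]. -/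
/-!
Since `σ_A √q ≤ 2σ √q ≲ n^{1/4}` (a centered subGaussian variable has second moment at most
`4σ²`), the deviation `|‖A_i‖₂ − σ_A √q|` can exceed `c n^{1/4}` only if `‖A_i‖₂ > c n^{1/4}`,
hence only if some coordinate satisfies `|A_{ij}| ≥ τ := c n^{1/4} / √q`. Each of the `nq`
coordinates does so with probability at most `2 exp(−τ²/(2σ²)) = 2 exp(−c² √n / (2σ²q))`, which
is at most `exp(−c √n / q)` once `c` is large compared with `σ²` and `K`; a union bound
finishes the proof.
-/

open MeasureTheory ProbabilityTheory

/-- A real-valued random variable `f` is subGaussian with parameter `σ > 0` if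
`P(|f − E f| ≥ t) ≤ 2 exp(−t²/(2σ²))` for all `t ≥ 0`. -/
def IsSubGaussianRV {Ω : Type*} [MeasurableSpace Ω] (μ : Measure Ω) (f : Ω → ℝ) (σ : ℝ) :
    Prop :=
  ∀ t : ℝ, 0 ≤ t →
    μ {ω | t ≤ |f ω - ∫ x, f x ∂μ|} ≤ ENNReal.ofReal (2 * Real.exp (-t ^ 2 / (2 * σ ^ 2)))

section SubGaussian

variable {Ω : Type*} [MeasurableSpace Ω] {μ : Measure Ω} {f : Ω → ℝ} {σ : ℝ}

lemma IsSubGaussianRV.measure_le_abs_le (hsg : IsSubGaussianRV μ f σ)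
    (hmean : ∫ ω, f ω ∂μ = 0) {t : ℝ} (ht : 0 ≤ t) :
    μ {ω | t ≤ |f ω|} ≤ ENNReal.ofReal (2 * Real.exp (-t ^ 2 / (2 * σ ^ 2))) := by
  simpa [hmean] using hsg t ht

lemma IsSubGaussianRV.measure_le_sq_le (hsg : IsSubGaussianRV μ f σ)
    (hmean : ∫ ω, f ω ∂μ = 0) {t : ℝ} (ht : 0 ≤ t) :
    μ {ω | t ≤ f ω ^ 2} ≤ ENNReal.ofReal (2 * Real.exp (-(2 * σ ^ 2)⁻¹ * t)) := by
  have hsub : {ω | t ≤ f ω ^ 2} ⊆ {ω | √t ≤ |f ω|} := fun ω hω ↦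
    Real.sqrt_le_sqrt hω |>.trans_eq (Real.sqrt_sq_eq_abs _)
  calc μ {ω | t ≤ f ω ^ 2} ≤ μ {ω | √t ≤ |f ω|} := measure_mono hsub
    _ ≤ _ := hsg.measure_le_abs_le hmean (Real.sqrt_nonneg t)
    _ = _ := by rw [Real.sq_sqrt ht]; ring_nf

lemma integral_two_mul_exp_neg_mul_Ioi {b : ℝ} (hb : 0 < b) :
    ∫ t in Set.Ioi (0 : ℝ), 2 * Real.exp (-b * t) = 2 / b := by
  rw [integral_const_mul, integral_exp_mul_Ioi (neg_neg_of_pos hb)]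
  field_simp
  simp

lemma IsSubGaussianRV.integral_sq_le [IsProbabilityMeasure μ] (hsg : IsSubGaussianRV μ f σ)
    (hf : AEMeasurable f μ) (hmean : ∫ ω, f ω ∂μ = 0) (hσ : σ ≠ 0) :
    ∫ ω, f ω ^ 2 ∂μ ≤ 4 * σ ^ 2 := by
  set b := (2 * σ ^ 2)⁻¹
  have hb : 0 < b := by positivity
  have hsq : 0 ≤ᵐ[μ] fun ω ↦ f ω ^ 2 := .of_forall fun ω ↦ sq_nonneg _
  have hexp : IntegrableOn (fun t ↦ 2 * Real.exp (-b * t)) (Set.Ioi 0) :=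
    (exp_neg_integrableOn_Ioi 0 hb).const_mul 2
  -- layer-cake formula for `f²`
  have hlayer : ∫⁻ ω, ENNReal.ofReal (f ω ^ 2) ∂μ ≤ ENNReal.ofReal (4 * σ ^ 2) :=
    calc ∫⁻ ω, ENNReal.ofReal (f ω ^ 2) ∂μ = ∫⁻ t in Set.Ioi 0, μ {ω | t ≤ f ω ^ 2} :=
          lintegral_eq_lintegral_meas_le μ hsq (hf.pow_const 2)
      _ ≤ ∫⁻ t in Set.Ioi 0, ENNReal.ofReal (2 * Real.exp (-b * t)) :=
          setLIntegral_mono' measurableSet_Ioi fun t ht ↦ hsg.measure_le_sq_le hmean ht.le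
      _ = ENNReal.ofReal (4 * σ ^ 2) := by
          rw [← ofReal_integral_eq_lintegral_ofReal hexp (.of_forall fun t ↦ by positivity),
            integral_two_mul_exp_neg_mul_Ioi hb]
          congr 1
          simp only [b]
          field_simp
          ring
  rw [integral_eq_lintegral_of_nonneg_ae hsq (hf.pow_const 2).aestronglyMeasurable]
  exact ENNReal.toReal_le_of_le_ofReal (by positivity) hlayer

lemma inv_card_mul_sum_integral_sq_le {ι : Type*} [Fintype ι] [IsProbabilityMeasure μ]
    {X : Ω → ι → ℝ} (hσ : σ ≠ 0)
    (hX : ∀ j, AEMeasurable (fun ω ↦ X ω j) μ) (hmean : ∀ j, ∫ ω, X ω j ∂μ = 0)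
    (hsg : ∀ j, IsSubGaussianRV μ (fun ω ↦ X ω j) σ) :
    (Fintype.card ι : ℝ)⁻¹ * ∑ j, ∫ ω, X ω j ^ 2 ∂μ ≤ 4 * σ ^ 2 := by
  rcases isEmpty_or_nonempty ι with _ | _
  · simp [sq_nonneg]
  have hcard : (0 : ℝ) < Fintype.card ι := by exact_mod_cast Fintype.card_pos
  rw [inv_mul_le_iff₀ hcard]
  calc ∑ j, ∫ ω, X ω j ^ 2 ∂μ ≤ ∑ _j : ι, 4 * σ ^ 2 :=
        Finset.sum_le_sum fun j _ ↦ (hsg j).integral_sq_le (hX j) (hmean j) hσ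
    _ = Fintype.card ι * (4 * σ ^ 2) := by simp

end SubGaussian

lemma one_sub_card_mul_le_measure_iInter_compl {Ω ι : Type*} [MeasurableSpace Ω] [Fintype ι]
    {μ : Measure Ω} [IsProbabilityMeasure μ] (s : ι → Set Ω) {ε : ENNReal}
    (h : ∀ i, μ (s i) ≤ ε) : 1 - Fintype.card ι * ε ≤ μ (⋂ i, (s i)ᶜ) := by
  have hunion : μ (⋃ i, s i) ≤ Fintype.card ι * ε :=
    calc μ (⋃ i, s i) ≤ ∑ i, μ (s i) := measure_iUnion_fintype_le μ s
      _ ≤ ∑ _i : ι, ε := Finset.sum_le_sum fun i _ ↦ h i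
      _ = Fintype.card ι * ε := by simp
  have hcover : 1 ≤ μ (⋂ i, (s i)ᶜ) + μ (⋃ i, s i) := by
    rw [← Set.compl_iUnion, ← measure_univ (μ := μ), ← Set.compl_union_self (⋃ i, s i)]
    exact measure_union_le _ _
  exact (tsub_le_tsub_left hunion 1).trans (tsub_le_iff_right.mpr hcover)

lemma abs_sqrt_sum_sq_sub_le {ι : Type*} [Fintype ι] {x : ι → ℝ} {a t : ℝ} (ha : 0 ≤ a)
    (hat : a ≤ t) (hx : ∀ i, |x i| ≤ t / √(Fintype.card ι)) :
    |√(∑ i, x i ^ 2) - a| ≤ t := by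
  have ht : 0 ≤ t := ha.trans hat
  have hsum : ∑ i, x i ^ 2 ≤ t ^ 2 := by
    rcases isEmpty_or_nonempty ι with _ | _
    · simp [sq_nonneg]
    have hcard : (0 : ℝ) < Fintype.card ι := by exact_mod_cast Fintype.card_pos
    calc ∑ i, x i ^ 2 ≤ ∑ _i : ι, (t / √(Fintype.card ι)) ^ 2 :=
          Finset.sum_le_sum fun i _ ↦ sq_le_sq' (neg_le_of_abs_le (hx i)) (le_of_abs_le (hx i))
      _ = t ^ 2 := by
          rw [Finset.sum_const, Finset.card_univ, nsmul_eq_mul, div_pow,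
            Real.sq_sqrt hcard.le]
          field_simp
  exact abs_sub_le_of_nonneg_of_le (Real.sqrt_nonneg _)
    ((Real.sqrt_le_sqrt hsum).trans_eq (Real.sqrt_sq ht)) ha hat

lemma two_mul_exp_neg_le_exp_neg {σ τ c r : ℝ} (hσ : σ ≠ 0) (hc : 4 * σ ^ 2 ≤ c)
    (hτ : τ ^ 2 = c ^ 2 * r) (hlog : Real.log 2 ≤ c * r) :
    2 * Real.exp (-τ ^ 2 / (2 * σ ^ 2)) ≤ Real.exp (-(c * r)) := by
  have hσ2 : 0 < 2 * σ ^ 2 := by positivity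
  have hcr : 2 * (c * r) ≤ τ ^ 2 / (2 * σ ^ 2) := by
    rw [le_div_iff₀ hσ2, hτ]
    nlinarith [Real.log_pos one_lt_two]
  calc 2 * Real.exp (-τ ^ 2 / (2 * σ ^ 2))
      = Real.exp (Real.log 2 + -τ ^ 2 / (2 * σ ^ 2)) := by
        rw [Real.exp_add, Real.exp_log two_pos]
    _ ≤ Real.exp (-(c * r)) := by
        gcongr
        rw [neg_div]
        linarith

lemma natCast_mul_ofReal_le_ofReal_exp_add_log {m : ℕ} (hm : 0 < m) {x y : ℝ}
    (h : x ≤ Real.exp y) : (m : ENNReal) * ENNReal.ofReal x ≤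
      ENNReal.ofReal (Real.exp (y + Real.log m)) := by
  rw [Real.exp_add, Real.exp_log (by positivity), ← ENNReal.ofReal_natCast,
    ← ENNReal.ofReal_mul (by positivity), mul_comm]
  gcongr

lemma mul_sqrt_le_of_sq_le {a σ K q w c : ℝ} (ha : 0 ≤ a) (hσ : 0 ≤ σ) (hK : 0 ≤ K)
    (hw : 0 ≤ w) (haσ : a ^ 2 ≤ 4 * σ ^ 2) (hqK : q ≤ K * w ^ 2) (hc : 2 * σ * √K ≤ c) :
    a * √q ≤ c * w := by
  have ha' : a ≤ 2 * σ :=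
    pow_le_pow_iff_left₀ ha (by positivity) two_ne_zero |>.mp (by linarith)
  have hq : √q ≤ √K * w := by
    rw [← Real.sqrt_sq hw, ← Real.sqrt_mul hK]
    exact Real.sqrt_le_sqrt hqK
  calc a * √q ≤ 2 * σ * (√K * w) := mul_le_mul ha' hq (Real.sqrt_nonneg _) (by positivity)
    _ ≤ c * w := by rw [← mul_assoc]; gcongr

lemma log_two_le_mul_div {K c s q : ℝ} (hq : 0 < q) (hs : 0 ≤ s) (hqK : q ≤ K * s)
    (hc : K * Real.log 2 ≤ c) : Real.log 2 ≤ c * (s / q) :=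
  calc Real.log 2 ≤ Real.log 2 * (K * s / q) := by
        refine le_mul_of_one_le_right (Real.log_nonneg one_le_two) ?_
        rwa [one_le_div hq]
    _ = K * Real.log 2 * (s / q) := by ring
    _ ≤ c * (s / q) := by gcongr

lemma rpow_one_div_four_sq {x : ℝ} (hx : 0 ≤ x) : (x ^ (1 / 4 : ℝ)) ^ 2 = √x := by
  rw [← Real.rpow_natCast, ← Real.rpow_mul hx, Real.sqrt_eq_rpow]
  norm_num

/-- maximal norm concentration, Lemma C.2.
Let `A₁,…,A_n` be i.i.d. `q`-dimensional centered random vectors whose (possibly dependent)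
coordinates are subGaussian with a common parameter.  If `q ≲ √n`, then there is a constant
`c > 0` such that `max_{1≤i≤n} |‖A_i‖₂ − σ_A √q| ≤ c n^{1/4}` with probability at least
`1 − e^{−c n^{1/2}/q + log(nq)}`, where `σ_A² = q⁻¹ Σ_j E[A_{ij}²]`. -/
theorem statement_12 :
    ∀ σp K : ℝ, 0 < σp → 0 < K →
    ∃ c : ℝ, 0 < c ∧
      ∀ (n q : ℕ), 0 < n → 0 < q → (q : ℝ) ≤ K * Real.sqrt n →
      ∀ (Ω : Type) (_ : MeasurableSpace Ω) (μ : Measure Ω), IsProbabilityMeasure μ →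
      ∀ (A : Ω → Fin n → Fin q → ℝ),
        (∀ i j, Measurable fun ω => A ω i j) →
        -- the rows A₁,…,A_n are independent and identically distributed
        iIndepFun (fun i ω => A ω i) μ →
        (∀ i i' : Fin n, IdentDistrib (fun ω => A ω i) (fun ω => A ω i') μ μ) →
        -- centered, with subGaussian coordinates with common parameter σp
        (∀ i j, ∫ ω, A ω i j ∂μ = 0) →
        (∀ i j, IsSubGaussianRV μ (fun ω => A ω i j) σp) →
      ∀ σA : ℝ, 0 ≤ σA → (∀ i, σA ^ 2 = (q : ℝ)⁻¹ * ∑ j, ∫ ω, (A ω i j) ^ 2 ∂μ) →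
        (1 : ENNReal) - ENNReal.ofReal
            (Real.exp (-c * Real.sqrt n / q + Real.log (n * q)))
          ≤ μ {ω | ∀ i, |Real.sqrt (∑ j, (A ω i j) ^ 2) - σA * Real.sqrt q|
                    ≤ c * (n : ℝ) ^ ((1 : ℝ) / 4)} := by
  intro σp K hσp hK
  set c := max (4 * σp ^ 2) (max (2 * σp * √K) (K * Real.log 2))
  have hc₁ : 4 * σp ^ 2 ≤ c := le_max_left _ _
  have hc₂ : 2 * σp * √K ≤ c := le_max_of_le_right (le_max_left _ _)
  have hc₃ : K * Real.log 2 ≤ c := le_max_of_le_right (le_max_right _ _)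
  refine ⟨c, by positivity, ?_⟩
  intro n q hn hq hqK Ω _ μ _ A hA _ _ hmean hsg σA hσA hσAsq
  have hq' : (0 : ℝ) < q := by exact_mod_cast hq
  set w := (n : ℝ) ^ (1 / 4 : ℝ)
  have hw : w ^ 2 = √n := rpow_one_div_four_sq n.cast_nonneg
  -- if no coordinate of row `i` reaches `τ`, both `‖A_i‖₂` and `σA √q` lie in `[0, c w]`
  set τ := c * w / √q
  have hτ : τ ^ 2 = c ^ 2 * (√n / q) := by
    rw [div_pow, mul_pow, hw, Real.sq_sqrt hq'.le, mul_div_assoc]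
  have hσA_le : σA * √q ≤ c * w := by
    refine mul_sqrt_le_of_sq_le hσA hσp.le hK.le (by positivity) ?_ (hw ▸ hqK) hc₂
    rw [hσAsq ⟨0, hn⟩]
    simpa using inv_card_mul_sum_integral_sq_le hσp.ne' (fun j ↦ (hA _ j).aemeasurable)
      (hmean ⟨0, hn⟩) (hsg ⟨0, hn⟩)
  have hgood : ⋂ p : Fin n × Fin q, {ω | τ ≤ |A ω p.1 p.2|}ᶜ ⊆
      {ω | ∀ i, |√(∑ j, A ω i j ^ 2) - σA * √q| ≤ c * w} := by
    intro ω hω i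
    simp only [Set.mem_iInter, Set.mem_compl_iff, Set.mem_ofPred_eq, not_le] at hω
    exact abs_sqrt_sum_sq_sub_le (by positivity) hσA_le
      fun j ↦ by simpa using (hω (i, j)).le
  have hlog : Real.log 2 ≤ c * (√n / q) := log_two_le_mul_div hq' (by positivity) hqK hc₃
  have hexp : (Fintype.card (Fin n × Fin q) : ENNReal) *
        ENNReal.ofReal (2 * Real.exp (-τ ^ 2 / (2 * σp ^ 2))) ≤
      ENNReal.ofReal (Real.exp (-c * √n / q + Real.log (n * q))) := by
    have := natCast_mul_ofReal_le_ofReal_exp_add_log (Nat.mul_pos hn hq)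
      (two_mul_exp_neg_le_exp_neg hσp.ne' hc₁ hτ hlog)
    simpa [neg_div, mul_div_assoc] using this
  calc 1 - ENNReal.ofReal (Real.exp (-c * √n / q + Real.log (n * q)))
      ≤ 1 - Fintype.card (Fin n × Fin q) *
          ENNReal.ofReal (2 * Real.exp (-τ ^ 2 / (2 * σp ^ 2))) := tsub_le_tsub_left hexp 1
    _ ≤ μ (⋂ p : Fin n × Fin q, {ω | τ ≤ |A ω p.1 p.2|}ᶜ) :=
        one_sub_card_mul_le_measure_iInter_compl _ fun p ↦
          (hsg p.1 p.2).measure_le_abs_le (hmean p.1 p.2) (by positivity)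
    _ ≤ _ := measure_mono hgood
end
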